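/- arXiv:2002.00859 — 2 statements merged into one kernel-verified Lean document; each statement's English description precedes it below -/
import Mathlib

section
/- A measure η ∈ W₁(ℝ) is a Dirac mass if and only if for every n ∈ ℕ there exist adjacent measures μ_n, ν_n ∈ W₁(ℝ) with d_{W₁}(μ_n,ν_n) = n such that η is either the vertical or the horizontal bisecting measure of μ_n and ν_n. -/
open MeasureTheory Set

noncomputable section

/-- Cumulative distribution function `F_μ(x) = μ((-∞,x])`. -/
def cdfR (μ : Measure ℝ) (x : ℝ) : ℝ := (μ (Set.Iic x)).toReal

/-- The Wasserstein space `W₁(ℝ)`: Borel probability measures on `ℝ` with finite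
first moment. -/
def PR : Set (Measure ℝ) := {μ | IsProbabilityMeasure μ ∧ Integrable (fun x => |x|) μ}

/-- The 1-Wasserstein distance on `ℝ` via Vallender's formula. -/
def dW1R (μ ν : Measure ℝ) : ℝ := ∫ x, |cdfR μ x - cdfR ν x|

/-- The metric midpoint set of `μ` and `ν` in `W₁(ℝ)`. -/
def Mid (μ ν : Measure ℝ) : Set (Measure ℝ) :=
  {ξ ∈ PR | dW1R μ ξ = dW1R μ ν / 2 ∧ dW1R ξ ν = dW1R μ ν / 2}
/-- `μ` and `ν` are adjacent with witness interval `(a,b)`: their CDFs agree outside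
`[a,b)` and both are constant on `[a,b)`. -/
def Adj (μ ν : Measure ℝ) (a b : ℝ) : Prop :=
  a < b ∧ (∀ x, x ∉ Set.Ico a b → cdfR μ x = cdfR ν x) ∧
    (∀ x ∈ Set.Ico a b, cdfR μ x = cdfR μ a) ∧ (∀ x ∈ Set.Ico a b, cdfR ν x = cdfR ν a)

/-- CDF of the vertical bisecting measure of an adjacent pair: it follows the smaller
constant on the left half `[a, (a+b)/2)` of the flat interval and the larger one on
the right half. -/
def GV (μ ν : Measure ℝ) (a b : ℝ) (x : ℝ) : ℝ :=
  if x < a then cdfR μ x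
  else if x < (a + b) / 2 then min (cdfR μ a) (cdfR ν a)
  else if x < b then max (cdfR μ a) (cdfR ν a)
  else cdfR μ x

/-- CDF of the horizontal bisecting measure of an adjacent pair: it takes the average
of the two constant values on the flat interval `[a,b)`. -/
def GH (μ ν : Measure ℝ) (a b : ℝ) (x : ℝ) : ℝ :=
  if a ≤ x ∧ x < b then (cdfR μ a + cdfR ν a) / 2 else cdfR μ x

/-!
The Dirac mass at `t` is the vertical bisector of `δ (t - n/2)` and `δ (t + n/2)`.

Conversely, Markov's inequality bounds how long the CDF of `η` can stay flat at a level `c`: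
a flat stretch of length `L` forces `min c (1 - c) * L / 4 ≤ ∫ |x| dη`. If `μ, ν` are adjacent
on `[a, b)` with CDF levels differing by `δ`, then `n = dW₁(μ, ν) = δ (b - a)`. A horizontal
bisector is flat on `[a, b)` at a level at distance at least `δ / 2` from `0` and `1`, so
`n ≤ 8 ∫ |x| dη`. A vertical bisector is flat on the two halves of `[a, b)` at levels
`lo < hi` with `hi - lo = δ`; this makes `lo` and `1 - hi` of order `1 / n`, so the jump of the
CDF at the midpoint is an atom of mass `1 - O(1 / n)`. Atoms of mass above `1 / 2` are unique, so
a single point carries all the mass.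
-/

open ProbabilityTheory Filter Function

theorem exists_eq_dirac_of_forall_exists_measureReal_singleton_gt {α : Type*}
    [MeasurableSpace α] [MeasurableSingletonClass α] (μ : Measure α) [IsProbabilityMeasure μ]
    (h : ∀ ε > 0, ∃ x, 1 - ε < μ.real {x}) : ∃ t, μ = Measure.dirac t := by
  obtain ⟨t, ht⟩ := h (1 / 2) (by norm_num)
  have h_gt : ∀ ε > 0, 1 - ε < μ.real {t} := by
    intro ε hε
    obtain ⟨x, hx⟩ := h (min ε (1 / 2)) (by positivity)
    obtain rfl : x = t := by
      by_contra hne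
      have hsum := measureReal_union (μ := μ)
        (Set.disjoint_singleton.2 hne) (measurableSet_singleton t)
      linarith [measureReal_le_one (μ := μ) (s := {x} ∪ {t}), min_le_right ε (1 / 2)]
    linarith [min_le_left ε (1 / 2)]
  have h_one : μ {t} = 1 := by
    have : μ.real {t} = 1 :=
      le_antisymm measureReal_le_one (le_of_forall_pos_lt_add fun ε hε => by linarith [h_gt ε hε])
    rwa [measureReal_def, ENNReal.toReal_eq_one_iff] at this
  refine ⟨t, ?_⟩
  have h_ae : ∀ᵐ x ∂μ, x ∈ ({t} : Set α) := by
    rw [ae_iff]; exact prob_compl_eq_zero_iff (measurableSet_singleton t) |>.2 h_one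
  rw [← Measure.restrict_eq_self_of_ae_mem h_ae, Measure.restrict_singleton, h_one, one_smul]

lemma cdfR_eq_cdf (μ : Measure ℝ) [IsProbabilityMeasure μ] : cdfR μ = cdf μ := by
  ext x; rw [cdfR, cdf_eq_real, measureReal_def]

lemma cdfR_dirac (s x : ℝ) : cdfR (Measure.dirac s) x = if s ≤ x then 1 else 0 := by
  rw [cdfR, Measure.dirac_apply' _ measurableSet_Iic]
  by_cases h : s ≤ x <;> simp [h]

lemma dirac_mem_PR (s : ℝ) : Measure.dirac s ∈ PR :=
  ⟨inferInstance, integrable_dirac (by simp)⟩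

lemma dW1R_eq_of_adj {μ ν : Measure ℝ} {a b : ℝ} (hadj : Adj μ ν a b) :
    dW1R μ ν = |cdfR μ a - cdfR ν a| * (b - a) := by
  obtain ⟨hab, h_out, hμ, hν⟩ := hadj
  have h_ind : (fun x => |cdfR μ x - cdfR ν x|)
      = (Ico a b).indicator (fun _ => |cdfR μ a - cdfR ν a|) := by
    funext x
    by_cases hx : x ∈ Ico a b
    · rw [indicator_of_mem hx, hμ x hx, hν x hx]
    · rw [indicator_of_notMem hx, h_out x hx, sub_self, abs_zero]
  rw [dW1R, h_ind, integral_indicator measurableSet_Ico, setIntegral_const, measureReal_def,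
    Real.volume_Ico, smul_eq_mul, ENNReal.toReal_ofReal (by linarith), mul_comm]

lemma adj_dirac_dirac {a b : ℝ} (hab : a < b) : Adj (Measure.dirac a) (Measure.dirac b) a b := by
  refine ⟨hab, fun x hx => ?_, fun x hx => ?_, fun x hx => ?_⟩ <;>
    simp only [cdfR_dirac, mem_Ico, not_and_or, not_le, not_lt] at hx ⊢
  · rcases hx with hx | hx
    · rw [if_neg (by linarith), if_neg (by linarith)]
    · rw [if_pos (by linarith), if_pos hx]
  · rw [if_pos hx.1, if_pos le_rfl]
  · rw [if_neg (by linarith), if_neg (by linarith)]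

lemma dW1R_dirac_dirac {a b : ℝ} (hab : a < b) :
    dW1R (Measure.dirac a) (Measure.dirac b) = b - a := by
  rw [dW1R_eq_of_adj (adj_dirac_dirac hab), cdfR_dirac, cdfR_dirac, if_pos le_rfl,
    if_neg (not_le.2 hab)]
  norm_num

lemma cdfR_dirac_midpoint_eq_GV {a b : ℝ} (hab : a < b) (x : ℝ) :
    cdfR (Measure.dirac ((a + b) / 2)) x = GV (Measure.dirac a) (Measure.dirac b) a b x := by
  simp only [GV, cdfR_dirac, le_refl, if_true, if_neg (not_le.2 hab)]
  split_ifs <;> first | linarith | norm_num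

section FirstMoment

variable {η : Measure ℝ} [IsProbabilityMeasure η] (hη : Integrable (fun x => |x|) η)
include hη

lemma cdf_mul_neg_le_integral_abs {y : ℝ} (hy : y ≤ 0) : cdf η y * -y ≤ ∫ x, |x| ∂η :=
  calc cdf η y * -y = -y * η.real (Iic y) := by rw [cdf_eq_real, mul_comm]
    _ ≤ -y * η.real {x | -y ≤ |x|} :=
        mul_le_mul_of_nonneg_left (measureReal_mono fun x (hx : x ≤ y) =>
          (neg_le_neg hx).trans (neg_le_abs x)) (neg_nonneg.2 hy)
    _ ≤ ∫ x, |x| ∂η := mul_meas_ge_le_integral_of_nonneg (ae_of_all _ fun x => abs_nonneg x) hη _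

lemma one_sub_cdf_mul_le_integral_abs {y : ℝ} (hy : 0 ≤ y) :
    (1 - cdf η y) * y ≤ ∫ x, |x| ∂η :=
  calc (1 - cdf η y) * y = y * η.real (Ioi y) := by
        rw [cdf_eq_real, ← compl_Iic, probReal_compl_eq_one_sub measurableSet_Iic, mul_comm]
    _ ≤ y * η.real {x | y ≤ |x|} :=
        mul_le_mul_of_nonneg_left (measureReal_mono fun x (hx : y < x) =>
          hx.le.trans (le_abs_self x)) hy
    _ ≤ ∫ x, |x| ∂η := mul_meas_ge_le_integral_of_nonneg (ae_of_all _ fun x => abs_nonneg x) hη _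

lemma min_mul_le_integral_abs_of_cdf_flat {u v c : ℝ} (huv : u < v)
    (hflat : ∀ x ∈ Ico u v, cdf η x = c) : min c (1 - c) * ((v - u) / 4) ≤ ∫ x, |x| ∂η := by
  have hc : c ∈ Icc 0 1 := hflat u ⟨le_rfl, huv⟩ ▸ ⟨cdf_nonneg η u, cdf_le_one η u⟩
  by_cases hu : u ≤ -((v - u) / 4)
  · calc min c (1 - c) * ((v - u) / 4) ≤ c * -u :=
          mul_le_mul (min_le_left _ _) (by linarith) (by linarith) hc.1
      _ ≤ ∫ x, |x| ∂η := hflat u ⟨le_rfl, huv⟩ ▸ cdf_mul_neg_le_integral_abs hη (by linarith)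
  · have hy : u + (v - u) / 2 ∈ Ico u v := ⟨by linarith, by linarith⟩
    calc min c (1 - c) * ((v - u) / 4) ≤ (1 - c) * (u + (v - u) / 2) :=
          mul_le_mul (min_le_right _ _) (by linarith) (by linarith) (by linarith [hc.2])
      _ ≤ ∫ x, |x| ∂η := hflat _ hy ▸ one_sub_cdf_mul_le_integral_abs hη (by linarith)

end FirstMoment
lemma measureReal_singleton_eq_of_cdf_flat (η : Measure ℝ) [IsProbabilityMeasure η] {a m c : ℝ}
    (ham : a < m) (hflat : ∀ x ∈ Ico a m, cdf η x = c) : η.real {m} = cdf η m - c := by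
  have h_lim : leftLim (cdf η) m = c := leftLim_eq_of_tendsto <| tendsto_const_nhds.congr' <|
    eventuallyEq_of_mem (Ico_mem_nhdsLT ham) fun x hx => (hflat x hx).symm
  have h_atom := (cdf η).measure_singleton m
  rw [measure_cdf, h_lim] at h_atom
  rw [measureReal_def, h_atom,
    ENNReal.toReal_ofReal (sub_nonneg.2 (hflat a ⟨le_rfl, ham⟩ ▸ (cdf η).mono ham.le))]

lemma cdfR_mem_Icc (μ : Measure ℝ) [IsProbabilityMeasure μ] (x : ℝ) : cdfR μ x ∈ Icc 0 1 :=
  cdfR_eq_cdf μ ▸ ⟨cdf_nonneg μ x, cdf_le_one μ x⟩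

section Bisecting

variable {μ ν η : Measure ℝ} [IsProbabilityMeasure μ] [IsProbabilityMeasure ν]
  [IsProbabilityMeasure η] {a b : ℝ}

lemma dW1R_le_of_cdfR_eq_GH (hη : Integrable (fun x => |x|) η) (hadj : Adj μ ν a b)
    (hGH : ∀ x, cdfR η x = GH μ ν a b x) : dW1R μ ν ≤ 8 * ∫ x, |x| ∂η := by
  set α := cdfR μ a
  set β := cdfR ν a
  have hflat : ∀ x ∈ Ico a b, cdf η x = (α + β) / 2 := fun x hx => by
    rw [← cdfR_eq_cdf, hGH, GH, if_pos ⟨hx.1, hx.2⟩]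
  have hα := cdfR_mem_Icc μ a
  have hβ := cdfR_mem_Icc ν a
  have hmin : |α - β| / 2 ≤ min ((α + β) / 2) (1 - (α + β) / 2) :=
    le_min (by cases abs_cases (α - β) <;> linarith [hα.1, hβ.1])
      (by cases abs_cases (α - β) <;> linarith [hα.2, hβ.2])
  have h_flat := min_mul_le_integral_abs_of_cdf_flat hη hadj.1 hflat
  have := mul_le_mul_of_nonneg_right hmin (by linarith [hadj.1] : 0 ≤ (b - a) / 4)
  rw [dW1R_eq_of_adj hadj]
  linarith

lemma one_sub_measureReal_mul_dW1R_le_of_cdfR_eq_GV (hη : Integrable (fun x => |x|) η)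
    (hadj : Adj μ ν a b) (hGV : ∀ x, cdfR η x = GV μ ν a b x) :
    (1 - η.real {(a + b) / 2}) * dW1R μ ν ≤ 16 * ∫ x, |x| ∂η := by
  set m := (a + b) / 2 with hm
  set lo := min (cdfR μ a) (cdfR ν a)
  set hi := max (cdfR μ a) (cdfR ν a)
  have ham : a < m := by linarith [hadj.1, hm]
  have hmb : m < b := by linarith [hadj.1, hm]
  have hflat_lo : ∀ x ∈ Ico a m, cdf η x = lo := fun x hx => by
    rw [← cdfR_eq_cdf, hGV, GV, if_neg (not_lt.2 hx.1), if_pos hx.2]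
  have hflat_hi : ∀ x ∈ Ico m b, cdf η x = hi := fun x hx => by
    rw [← cdfR_eq_cdf, hGV, GV, if_neg (not_lt.2 (ham.le.trans hx.1)), if_neg (not_lt.2 hx.1),
      if_pos hx.2]
  have h_atom : η.real {m} = hi - lo := by
    rw [measureReal_singleton_eq_of_cdf_flat η ham hflat_lo, hflat_hi m ⟨le_rfl, hmb⟩]
  have h_dist : dW1R μ ν = (hi - lo) * (b - a) := by
    rw [dW1R_eq_of_adj hadj, max_sub_min_eq_abs, abs_sub_comm]
  have hlo : 0 ≤ lo := le_min (cdfR_mem_Icc μ a).1 (cdfR_mem_Icc ν a).1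
  have hhi : hi ≤ 1 := max_le (cdfR_mem_Icc μ a).2 (cdfR_mem_Icc ν a).2
  have hlohi : lo ≤ hi := min_le_max
  calc (1 - η.real {m}) * dW1R μ ν
      = 8 * (lo * (hi - lo) * ((m - a) / 4)) + 8 * ((1 - hi) * (hi - lo) * ((b - m) / 4)) := by
        rw [h_atom, h_dist]; ring
    _ ≤ 8 * (min lo (1 - lo) * ((m - a) / 4)) + 8 * (min hi (1 - hi) * ((b - m) / 4)) := by
        gcongr 8 * (?_ * _) + 8 * (?_ * _) <;> exact le_min (by nlinarith) (by nlinarith)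
    _ ≤ 16 * ∫ x, |x| ∂η := by
        linarith [min_mul_le_integral_abs_of_cdf_flat hη ham hflat_lo,
          min_mul_le_integral_abs_of_cdf_flat hη hmb hflat_hi]

lemma exists_one_sub_measureReal_singleton_mul_dW1R_le (hη : Integrable (fun x => |x|) η)
    (hadj : Adj μ ν a b)
    (hbis : (∀ x, cdfR η x = GV μ ν a b x) ∨ (∀ x, cdfR η x = GH μ ν a b x)) :
    ∃ m, (1 - η.real {m}) * dW1R μ ν ≤ 16 * ∫ x, |x| ∂η := by
  rcases hbis with hGV | hGH
  · exact ⟨_, one_sub_measureReal_mul_dW1R_le_of_cdfR_eq_GV hη hadj hGV⟩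
  · refine ⟨0, ?_⟩
    have hd := dW1R_le_of_cdfR_eq_GH hη hadj hGH
    have hd0 : 0 ≤ dW1R μ ν := integral_nonneg fun _ => abs_nonneg _
    have hC : 0 ≤ ∫ x, |x| ∂η := integral_nonneg fun _ => abs_nonneg _
    nlinarith [measureReal_nonneg (μ := η) (s := {0})]

end Bisecting

/-- A measure `η ∈ W₁(ℝ)` is a Dirac mass iff for every `n ≥ 1` there are adjacent
measures `μₙ, νₙ ∈ W₁(ℝ)` at distance `n` such that `η` is their vertical or
horizontal bisecting measure. -/
theorem dirac_characterization (η : Measure ℝ) (hη : η ∈ PR) :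
    (∃ t : ℝ, η = Measure.dirac t) ↔
      ∀ n : ℕ, 0 < n → ∃ μ ∈ PR, ∃ ν ∈ PR, ∃ a b : ℝ, Adj μ ν a b ∧
        dW1R μ ν = n ∧
        ((∀ x, cdfR η x = GV μ ν a b x) ∨ (∀ x, cdfR η x = GH μ ν a b x)) := by
  constructor
  · rintro ⟨t, rfl⟩ n hn
    have hab : t - n / 2 < t + n / 2 := by linarith [(Nat.cast_pos.2 hn : (0 : ℝ) < n)]
    refine ⟨_, dirac_mem_PR _, _, dirac_mem_PR _, _, _, adj_dirac_dirac hab,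
      by rw [dW1R_dirac_dirac hab]; ring, Or.inl fun x => ?_⟩
    rw [← cdfR_dirac_midpoint_eq_GV hab]
    congr 2
    ring
  · intro H
    have := hη.1
    have hC : 0 ≤ ∫ x, |x| ∂η := integral_nonneg fun _ => abs_nonneg _
    refine exists_eq_dirac_of_forall_exists_measureReal_singleton_gt η fun ε hε => ?_
    obtain ⟨n, hn⟩ := exists_nat_gt (16 * (∫ x, |x| ∂η) / ε)
    have hn0 : (0 : ℝ) < n := (div_nonneg (by linarith) hε.le).trans_lt hn
    obtain ⟨μ, hμ, ν, hν, a, b, hadj, hdist, hbis⟩ := H n (Nat.cast_pos.1 hn0)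
    have := hμ.1
    have := hν.1
    obtain ⟨m, hm⟩ := exists_one_sub_measureReal_singleton_mul_dW1R_le hη.2 hadj hbis
    rw [hdist] at hm
    rw [div_lt_iff₀ hε] at hn
    exact ⟨m, by nlinarith⟩
end
end

section
/- Let X be a real strictly convex Banach space and K ⊂ X a convex set (possibly with empty interior) with 0 ∈ K such that the closed linear span of K is X. Then every isometric embedding φ: K → X with φ(0) = 0 extends uniquely to a linear isometric embedding L: X → X. -/
/-!
In a strictly convex space a point whose distances to `x` and `y` are `t * dist x y` and
`(1 - t) * dist x y` is the point of the segment `[x, y]` at parameter `t`. Hence `φ` preserves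
convex combinations on `K`: it maps midpoints to midpoints and, as `φ 0 = 0`, `t • x` to
`t • φ x` for `t ∈ [0, 1]`. Comparing the midpoints of `x, v` and `u, y` shows that `φ x - φ y`
depends only on `x - y`. Since `K` is convex and contains `0`, every `z ∈ span ℝ K` has the form
`t • z = x - y` with `t > 0` and `x, y ∈ K`, and `z ↦ t⁻¹ • (φ x - φ y)` is a well-defined
additive isometry of `span ℝ K`, hence `ℝ`-linear. It extends by density and completeness to a
linear isometry of the whole space, which is unique since continuous linear maps that agree on
`K` agree on the closure of its span.
-/

open Set AffineMap Submodule

section IsometricOnConvex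

variable {E F : Type*} [NormedAddCommGroup E] [NormedSpace ℝ E]
  [NormedAddCommGroup F] [NormedSpace ℝ F] [StrictConvexSpace ℝ F] {K : Set E} {φ : E → F}
  {x y u v : E}

theorem map_lineMap_of_isometricOn (hK : Convex ℝ K)
    (hiso : ∀ x ∈ K, ∀ y ∈ K, dist (φ x) (φ y) = dist x y) (hx : x ∈ K) (hy : y ∈ K)
    {t : ℝ} (ht : t ∈ Icc (0 : ℝ) 1) :
    φ (lineMap x y t) = lineMap (φ x) (φ y) t := by
  have hz : lineMap x y t ∈ K := hK.lineMap_mem hx hy ht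
  apply eq_lineMap_of_dist_eq_mul_of_dist_eq_mul
  · rw [hiso _ hx _ hz, hiso _ hx _ hy, dist_left_lineMap, Real.norm_of_nonneg ht.1]
  · rw [hiso _ hz _ hy, hiso _ hx _ hy, dist_lineMap_right,
      Real.norm_of_nonneg (sub_nonneg.2 ht.2)]

theorem map_midpoint_of_isometricOn (hK : Convex ℝ K)
    (hiso : ∀ x ∈ K, ∀ y ∈ K, dist (φ x) (φ y) = dist x y) (hx : x ∈ K) (hy : y ∈ K) :
    φ (midpoint ℝ x y) = midpoint ℝ (φ x) (φ y) :=
  map_lineMap_of_isometricOn hK hiso hx hy ⟨by norm_num, by norm_num⟩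

theorem map_smul_of_isometricOn (hK : Convex ℝ K) (h0 : (0 : E) ∈ K)
    (hiso : ∀ x ∈ K, ∀ y ∈ K, dist (φ x) (φ y) = dist x y) (hφ0 : φ 0 = 0) (hx : x ∈ K)
    {t : ℝ} (ht : t ∈ Icc (0 : ℝ) 1) :
    φ (t • x) = t • φ x := by
  simpa [hφ0, lineMap_apply_module'] using map_lineMap_of_isometricOn hK hiso h0 hx ht

theorem map_sub_eq_map_sub_of_isometricOn (hK : Convex ℝ K)
    (hiso : ∀ x ∈ K, ∀ y ∈ K, dist (φ x) (φ y) = dist x y)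
    (hx : x ∈ K) (hy : y ∈ K) (hu : u ∈ K) (hv : v ∈ K) (h : x - y = u - v) :
    φ x - φ y = φ u - φ v := by
  have hmid : midpoint ℝ x v = midpoint ℝ u y :=
    (midpoint_eq_midpoint_iff_vsub_eq_vsub ℝ).2 (sub_eq_sub_iff_sub_eq_sub.1 h)
  have himage := map_midpoint_of_isometricOn hK hiso hx hv
  rw [hmid, map_midpoint_of_isometricOn hK hiso hu hy] at himage
  exact sub_eq_sub_iff_sub_eq_sub.2 ((midpoint_eq_midpoint_iff_vsub_eq_vsub ℝ).1 himage.symm)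

end IsometricOnConvex

structure DiffRep {E : Type*} [AddCommGroup E] [Module ℝ E] (K : Set E) (z : E) where
  scale : ℝ
  left : E
  right : E
  scale_pos : 0 < scale
  left_mem : left ∈ K
  right_mem : right ∈ K
  smul_eq : scale • z = left - right

namespace DiffRep

section Construction

variable {E : Type*} [AddCommGroup E] [Module ℝ E] {K : Set E} {z w : E}

def ofMem (h0 : (0 : E) ∈ K) (hz : z ∈ K) : DiffRep K z :=
  ⟨1, z, 0, one_pos, hz, h0, by rw [one_smul, sub_zero]⟩

noncomputable def rescale (r : DiffRep K z) (hK : Convex ℝ K) (h0 : (0 : E) ∈ K) {c : ℝ}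
    (hc : 0 < c) (hcr : c ≤ r.scale) : DiffRep K z where
  scale := c
  left := (c / r.scale) • r.left
  right := (c / r.scale) • r.right
  scale_pos := hc
  left_mem := hK.smul_mem_of_zero_mem h0 r.left_mem
    ⟨(div_pos hc r.scale_pos).le, (div_le_one r.scale_pos).2 hcr⟩
  right_mem := hK.smul_mem_of_zero_mem h0 r.right_mem
    ⟨(div_pos hc r.scale_pos).le, (div_le_one r.scale_pos).2 hcr⟩
  smul_eq := by rw [← smul_sub, ← r.smul_eq, smul_smul, div_mul_cancel₀ _ r.scale_pos.ne']

noncomputable def add (r : DiffRep K z) (s : DiffRep K w) (hK : Convex ℝ K)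
    (h : r.scale = s.scale) : DiffRep K (z + w) where
  scale := r.scale / 2
  left := midpoint ℝ r.left s.left
  right := midpoint ℝ r.right s.right
  scale_pos := half_pos r.scale_pos
  left_mem := hK.midpoint_mem r.left_mem s.left_mem
  right_mem := hK.midpoint_mem r.right_mem s.right_mem
  smul_eq := by
    have hr := r.smul_eq
    have hs := s.smul_eq
    rw [← h] at hs
    rw [midpoint_eq_smul_add, midpoint_eq_smul_add, invOf_eq_inv]
    linear_combination (norm := module) (2 : ℝ)⁻¹ • (hr + hs)

def neg (r : DiffRep K z) : DiffRep K (-z) :=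
  ⟨r.scale, r.right, r.left, r.scale_pos, r.right_mem, r.left_mem,
    by rw [smul_neg, r.smul_eq, neg_sub]⟩

noncomputable def smul (r : DiffRep K z) {a : ℝ} (ha : 0 < a) : DiffRep K (a • z) :=
  ⟨r.scale / a, r.left, r.right, div_pos r.scale_pos ha, r.left_mem, r.right_mem,
    by rw [smul_smul, div_mul_cancel₀ _ ha.ne', r.smul_eq]⟩

theorem nonempty_of_mem_span (hK : Convex ℝ K) (h0 : (0 : E) ∈ K) (hz : z ∈ span ℝ K) :
    Nonempty (DiffRep K z) := by
  induction hz using Submodule.span_induction with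
  | mem x hx => exact ⟨ofMem h0 hx⟩
  | zero => exact ⟨ofMem h0 h0⟩
  | add a b _ _ ha hb =>
    obtain ⟨r⟩ := ha
    obtain ⟨s⟩ := hb
    have hc := lt_min r.scale_pos s.scale_pos
    exact ⟨(r.rescale hK h0 hc (min_le_left _ _)).add
      (s.rescale hK h0 hc (min_le_right _ _)) hK rfl⟩
  | smul a b _ hb =>
    obtain ⟨r⟩ := hb
    rcases lt_trichotomy a 0 with ha | rfl | ha
    · simpa only [neg_smul, neg_neg] using Nonempty.intro (r.smul (neg_pos.2 ha)).neg
    · rw [zero_smul]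
      exact ⟨ofMem h0 h0⟩
    · exact ⟨r.smul ha⟩

end Construction

section DiffQuot

variable {E F : Type*} [NormedAddCommGroup E] [NormedSpace ℝ E]
  [NormedAddCommGroup F] [NormedSpace ℝ F] {K : Set E} {φ : E → F} {z w : E}

noncomputable def diffQuot (r : DiffRep K z) (φ : E → F) : F := r.scale⁻¹ • (φ r.left - φ r.right)

theorem diffQuot_ofMem (h0 : (0 : E) ∈ K) (hφ0 : φ 0 = 0) (hz : z ∈ K) :
    (ofMem h0 hz).diffQuot φ = φ z := by
  simp [diffQuot, ofMem, hφ0]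

theorem norm_diffQuot (hiso : ∀ x ∈ K, ∀ y ∈ K, dist (φ x) (φ y) = dist x y)
    (r : DiffRep K z) : ‖r.diffQuot φ‖ = ‖z‖ := by
  rw [diffQuot, norm_smul, ← dist_eq_norm, hiso _ r.left_mem _ r.right_mem, dist_eq_norm,
    ← r.smul_eq, norm_smul, ← mul_assoc, ← norm_mul, inv_mul_cancel₀ r.scale_pos.ne', norm_one,
    one_mul]

variable [StrictConvexSpace ℝ F]

theorem diffQuot_rescale (hK : Convex ℝ K) (h0 : (0 : E) ∈ K)
    (hiso : ∀ x ∈ K, ∀ y ∈ K, dist (φ x) (φ y) = dist x y) (hφ0 : φ 0 = 0)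
    (r : DiffRep K z) {c : ℝ} (hc : 0 < c) (hcr : c ≤ r.scale) :
    (r.rescale hK h0 hc hcr).diffQuot φ = r.diffQuot φ := by
  have hr : c / r.scale ∈ Icc (0 : ℝ) 1 :=
    ⟨(div_pos hc r.scale_pos).le, (div_le_one r.scale_pos).2 hcr⟩
  simp only [diffQuot, rescale]
  rw [map_smul_of_isometricOn hK h0 hiso hφ0 r.left_mem hr,
    map_smul_of_isometricOn hK h0 hiso hφ0 r.right_mem hr, ← smul_sub, smul_smul]
  congr 1
  field_simp [hc.ne', r.scale_pos.ne']

theorem diffQuot_eq_of_scale_eq (hK : Convex ℝ K)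
    (hiso : ∀ x ∈ K, ∀ y ∈ K, dist (φ x) (φ y) = dist x y) (r s : DiffRep K z)
    (h : r.scale = s.scale) : r.diffQuot φ = s.diffQuot φ := by
  rw [diffQuot, diffQuot, h, map_sub_eq_map_sub_of_isometricOn hK hiso r.left_mem r.right_mem
    s.left_mem s.right_mem (by rw [← r.smul_eq, ← s.smul_eq, h])]

theorem diffQuot_eq (hK : Convex ℝ K) (h0 : (0 : E) ∈ K)
    (hiso : ∀ x ∈ K, ∀ y ∈ K, dist (φ x) (φ y) = dist x y) (hφ0 : φ 0 = 0)
    (r s : DiffRep K z) : r.diffQuot φ = s.diffQuot φ := by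
  have hc := lt_min r.scale_pos s.scale_pos
  rw [← r.diffQuot_rescale hK h0 hiso hφ0 hc (min_le_left _ _),
    ← s.diffQuot_rescale hK h0 hiso hφ0 hc (min_le_right _ _)]
  exact diffQuot_eq_of_scale_eq hK hiso _ _ rfl

theorem diffQuot_add_of_scale_eq (hK : Convex ℝ K)
    (hiso : ∀ x ∈ K, ∀ y ∈ K, dist (φ x) (φ y) = dist x y) (r : DiffRep K z) (s : DiffRep K w)
    (h : r.scale = s.scale) : (r.add s hK h).diffQuot φ = r.diffQuot φ + s.diffQuot φ := by
  simp only [diffQuot, add]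
  rw [map_midpoint_of_isometricOn hK hiso r.left_mem s.left_mem,
    map_midpoint_of_isometricOn hK hiso r.right_mem s.right_mem, midpoint_eq_smul_add,
    midpoint_eq_smul_add, invOf_eq_inv, ← h]
  have hr := r.scale_pos.ne'
  match_scalars <;> field_simp

theorem diffQuot_add (hK : Convex ℝ K) (h0 : (0 : E) ∈ K)
    (hiso : ∀ x ∈ K, ∀ y ∈ K, dist (φ x) (φ y) = dist x y) (hφ0 : φ 0 = 0)
    (r : DiffRep K z) (s : DiffRep K w) (t : DiffRep K (z + w)) :
    t.diffQuot φ = r.diffQuot φ + s.diffQuot φ := by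
  have hc := lt_min r.scale_pos s.scale_pos
  let r' := r.rescale hK h0 hc (min_le_left _ _)
  let s' := s.rescale hK h0 hc (min_le_right _ _)
  rw [← r.diffQuot_rescale hK h0 hiso hφ0 hc (min_le_left _ _),
    ← s.diffQuot_rescale hK h0 hiso hφ0 hc (min_le_right _ _)]
  exact (diffQuot_eq hK h0 hiso hφ0 _ _).trans (diffQuot_add_of_scale_eq hK hiso r' s' rfl)

end DiffQuot

end DiffRep

theorem exists_linearIsometry_span_of_isometricOn {E F : Type*} [NormedAddCommGroup E]
    [NormedSpace ℝ E] [NormedAddCommGroup F] [NormedSpace ℝ F] [StrictConvexSpace ℝ F]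
    {K : Set E} {φ : E → F} (hK : Convex ℝ K) (h0 : (0 : E) ∈ K)
    (hiso : ∀ x ∈ K, ∀ y ∈ K, dist (φ x) (φ y) = dist x y) (hφ0 : φ 0 = 0) :
    ∃ f : span ℝ K →ₗᵢ[ℝ] F, ∀ x (hx : x ∈ K), f ⟨x, subset_span hx⟩ = φ x := by
  let rep (z : span ℝ K) : DiffRep K z := (DiffRep.nonempty_of_mem_span hK h0 z.2).some
  let g : span ℝ K →+ F := AddMonoidHom.mk' (fun z ↦ (rep z).diffQuot φ) fun z w ↦
    DiffRep.diffQuot_add hK h0 hiso hφ0 (rep z) (rep w) (rep (z + w))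
  have hg : ∀ z, ‖g z‖ = ‖z‖ := fun z ↦ DiffRep.norm_diffQuot hiso (rep z)
  let f := g.toRealLinearMap (AddMonoidHomClass.isometry_of_norm g hg).continuous
  refine ⟨⟨f.toLinearMap, hg⟩, fun x hx ↦ ?_⟩
  exact (DiffRep.diffQuot_eq hK h0 hiso hφ0 _ (.ofMem h0 hx)).trans
    (DiffRep.diffQuot_ofMem h0 hφ0 hx)

theorem exists_linearIsometry_extend_of_dense {𝕜 E F : Type*} [NontriviallyNormedField 𝕜]
    [NormedAddCommGroup E] [NormedSpace 𝕜 E] [NormedAddCommGroup F] [NormedSpace 𝕜 F]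
    [CompleteSpace F] {p : Submodule 𝕜 E} (hp : Dense (p : Set E)) (f : p →ₗᵢ[𝕜] F) :
    ∃ L : E →ₗᵢ[𝕜] F, ∀ z : p, L z = f z := by
  have hdense : DenseRange p.subtypeL := hp.denseRange_val
  let L := f.toContinuousLinearMap.extend p.subtypeL
  have hLf : ∀ z : p, L z = f z :=
    ContinuousLinearMap.extend_eq _ hdense isometry_subtype_coe.isUniformInducing
  have hL : ∀ x, ‖L x‖ = ‖x‖ :=
    isClosed_property hdense (isClosed_eq L.continuous.norm continuous_norm) fun z ↦ by
      simp [hLf]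
  exact ⟨⟨L.toLinearMap, hL⟩, hLf⟩

/-- Mankiewicz-type extension lemma: in a real strictly convex Banach space `X`, every
isometric embedding of a convex set `K ∋ 0` with dense linear span, fixing `0`, extends
uniquely to a linear isometric embedding of `X`. -/
theorem mankiewicz_type_extension {X : Type*} [NormedAddCommGroup X] [NormedSpace ℝ X]
    [CompleteSpace X] [StrictConvexSpace ℝ X]
    (K : Set X) (hK : Convex ℝ K) (h0 : (0:X) ∈ K)
    (hspan : (Submodule.span ℝ K).topologicalClosure = ⊤)
    (φ : X → X) (hiso : ∀ x ∈ K, ∀ y ∈ K, ‖φ x - φ y‖ = ‖x - y‖)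
    (hφ0 : φ 0 = 0) :
    ∃! L : X →ₗ[ℝ] X, Isometry L ∧ ∀ x ∈ K, L x = φ x := by
  have hdense : Dense (span ℝ K : Set X) := dense_iff_topologicalClosure_eq_top.2 hspan
  have hdist : ∀ x ∈ K, ∀ y ∈ K, dist (φ x) (φ y) = dist x y := by
    simpa only [dist_eq_norm] using hiso
  obtain ⟨f, hf⟩ := exists_linearIsometry_span_of_isometricOn hK h0 hdist hφ0
  obtain ⟨L, hL⟩ := exists_linearIsometry_extend_of_dense hdense f
  have hLK : ∀ x ∈ K, L x = φ x := fun x hx ↦ (hL ⟨x, subset_span hx⟩).trans (hf x hx)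
  refine ⟨L.toLinearMap, ⟨L.isometry, hLK⟩, fun L' ⟨hL', hL'K⟩ ↦ ?_⟩
  have : (⟨L', hL'.continuous⟩ : X →L[ℝ] X) = L.toContinuousLinearMap :=
    ContinuousLinearMap.ext_on hdense fun x hx ↦ (hL'K x hx).trans (hLK x hx).symm
  exact congrArg ContinuousLinearMap.toLinearMap this
end
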